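/- arXiv:2305.15547 — 2 statements merged into one kernel-verified Lean document; each statement's English description precedes it below -/
import Mathlib

section
/- Consider the central spin system of 1 + N spin-1/2 particles: complex matrices indexed by Fin 2 × (Fin N → Fin 2). For a 2×2 matrix m, the central embedding m^{(c)} has entries m^{(c)} (i,f) (j,g) = m i j if f = g and 0 otherwise; for B ∈ M_N, the bath embedding B^{(b)} has entries B^{(b)} (i,f) (j,g) = B f g if i = j and 0 otherwise. Let g ∈ ℂ and H_int := g·(τ₊^{(c)} * S₋^{(b)} + τ₋^{(c)} * S₊^{(b)}), where τ₊ = σ₊ = !![0,1;0,0] and τ₋ = σ₋ = !![0,0;1,0]. Then H_int * S₋^{(b)} − S₋^{(b)} * H_int = g · (τ₋^{(c)} * S_z^{(b)}). -/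
open Matrix

/-- The Pauli lowering operator `σ₋`. -/
def σm : Matrix (Fin 2) (Fin 2) ℂ := !![0, 0; 1, 0]

/-- The Pauli raising operator `σ₊`. -/
def σp : Matrix (Fin 2) (Fin 2) ℂ := !![0, 1; 0, 0]

/-- The Pauli matrix `σ_z`. -/
def σz : Matrix (Fin 2) (Fin 2) ℂ := !![1, 0; 0, -1]

/-- Embedding of a single-spin operator `m` at site `k` of an `N`-spin system:
`m^{(k)} f g = m (f k) (g k)` if `f j = g j` for all `j ≠ k`, and `0` otherwise. -/
def embed {N : ℕ} (m : Matrix (Fin 2) (Fin 2) ℂ) (k : Fin N) :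
    Matrix (Fin N → Fin 2) (Fin N → Fin 2) ℂ :=
  fun f g => if ∀ j, j ≠ k → f j = g j then m (f k) (g k) else 0

/-- The collective lowering operator `S₋ = ∑ₖ σ₋^{(k)}`. -/
noncomputable def Sminus (N : ℕ) : Matrix (Fin N → Fin 2) (Fin N → Fin 2) ℂ := ∑ k, embed σm k

/-- The collective raising operator `S₊ = ∑ₖ σ₊^{(k)}`. -/
noncomputable def Splus (N : ℕ) : Matrix (Fin N → Fin 2) (Fin N → Fin 2) ℂ := ∑ k, embed σp k

/-- The collective operator `S_z = ∑ₖ σ_z^{(k)}`. -/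
noncomputable def Sz (N : ℕ) : Matrix (Fin N → Fin 2) (Fin N → Fin 2) ℂ := ∑ k, embed σz k

/-- Embedding of a single-spin operator acting on the central spin of the
`1 + N` spin system. -/
def cembed {N : ℕ} (m : Matrix (Fin 2) (Fin 2) ℂ) :
    Matrix (Fin 2 × (Fin N → Fin 2)) (Fin 2 × (Fin N → Fin 2)) ℂ :=
  fun p q => if p.2 = q.2 then m p.1 q.1 else 0

/-- Embedding of a bath operator into the `1 + N` spin system. -/
def bembed {N : ℕ} (B : Matrix (Fin N → Fin 2) (Fin N → Fin 2) ℂ) :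
    Matrix (Fin 2 × (Fin N → Fin 2)) (Fin 2 × (Fin N → Fin 2)) ℂ :=
  fun p q => if p.1 = q.1 then B p.2 q.2 else 0

/-! The interaction factorises as `g (τ₊ ⊗ S₋ + τ₋ ⊗ S₊)` and `S₋` acts only on the bath, so the
commutator reduces to `g (τ₊ ⊗ [S₋, S₋] + τ₋ ⊗ [S₊, S₋])`. Single-site operators at distinct
sites commute, hence `[S₊, S₋] = ∑ₖ [σ₊, σ₋]^{(k)} = S_z`. -/

open scoped Kronecker

theorem Matrix.kronecker_mul_one_kronecker_sub {R l n : Type*} [CommRing R] [Fintype l]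
    [DecidableEq l] [Fintype n] (a : Matrix l l R) (B C : Matrix n n R) :
    a ⊗ₖ B * 1 ⊗ₖ C - 1 ⊗ₖ C * a ⊗ₖ B = a ⊗ₖ (B * C - C * B) := by
  ext ⟨i, f⟩ ⟨j, g⟩
  simp only [← mul_kronecker_mul, mul_one, one_mul, sub_apply, kronecker_apply, mul_sub]

theorem cembed_eq_kronecker {N : ℕ} (m : Matrix (Fin 2) (Fin 2) ℂ) :
    cembed (N := N) m = m ⊗ₖ 1 := by
  ext ⟨i, f⟩ ⟨j, g⟩
  simp [cembed, one_apply]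

theorem bembed_eq_kronecker {N : ℕ} (B : Matrix (Fin N → Fin 2) (Fin N → Fin 2) ℂ) :
    bembed B = 1 ⊗ₖ B := by
  ext ⟨i, f⟩ ⟨j, g⟩
  simp [bembed, one_apply]

theorem cembed_mul_bembed {N : ℕ} (m : Matrix (Fin 2) (Fin 2) ℂ)
    (B : Matrix (Fin N → Fin 2) (Fin N → Fin 2) ℂ) :
    cembed m * bembed B = m ⊗ₖ B := by
  rw [cembed_eq_kronecker, bembed_eq_kronecker, ← mul_kronecker_mul, mul_one, one_mul]

section embed

variable {N : ℕ}

/-- `m^{(k)}` only changes the `k`-th spin of a basis state, so products of single-site operators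
reduce to identities between `Function.update`s. -/
theorem embed_mulVec_apply (m : Matrix (Fin 2) (Fin 2) ℂ) (k : Fin N)
    (v : (Fin N → Fin 2) → ℂ) (f : Fin N → Fin 2) :
    (embed m k *ᵥ v) f = ∑ b, m (f k) b * v (Function.update f k b) := by
  have hfiber : ∀ g : Fin N → Fin 2, (∑ b, if g = Function.update f k b then m (f k) b * v g
      else 0) = if ∀ j, j ≠ k → f j = g j then m (f k) (g k) * v g else 0 := by
    intro g
    simp only [Function.eq_update_iff, ite_and, Finset.sum_ite_eq, Finset.mem_univ, if_true]
    exact if_congr ⟨fun h j hj => (h j hj).symm, fun h j hj => (h j hj).symm⟩ rfl rfl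
  simp only [mulVec, dotProduct, embed, ite_mul, zero_mul]
  rw [← Finset.sum_congr rfl fun g _ => hfiber g, Finset.sum_comm]
  exact Finset.sum_congr rfl fun b _ => by simp [Finset.sum_ite_eq']

theorem embed_mul_self (m n : Matrix (Fin 2) (Fin 2) ℂ) (k : Fin N) :
    embed m k * embed n k = embed (m * n) k := by
  refine ext_iff_mulVec.2 fun v => funext fun f => ?_
  simp only [← mulVec_mulVec, embed_mulVec_apply, Function.update_self,
    Function.update_idem, mul_apply, Finset.mul_sum, Finset.sum_mul, mul_assoc]
  exact Finset.sum_comm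

theorem embed_mul_comm_of_ne (m n : Matrix (Fin 2) (Fin 2) ℂ) {k l : Fin N} (hkl : k ≠ l) :
    embed m k * embed n l = embed n l * embed m k := by
  refine ext_iff_mulVec.2 fun v => funext fun f => ?_
  simp only [← mulVec_mulVec, embed_mulVec_apply, Function.update_of_ne hkl,
    Function.update_of_ne hkl.symm, Finset.mul_sum, Function.update_comm hkl]
  rw [Finset.sum_comm]
  exact Finset.sum_congr rfl fun b _ => Finset.sum_congr rfl fun a _ => by ring

theorem embed_sub (m n : Matrix (Fin 2) (Fin 2) ℂ) (k : Fin N) :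
    embed (m - n) k = embed m k - embed n k := by
  ext f g
  simp only [embed, Matrix.sub_apply]
  split_ifs <;> simp

theorem embed_mul_sub_mul (m n : Matrix (Fin 2) (Fin 2) ℂ) (k l : Fin N) :
    embed m k * embed n l - embed n l * embed m k =
      if k = l then embed (m * n - n * m) k else 0 := by
  split_ifs with hkl
  · rw [hkl, embed_sub, embed_mul_self, embed_mul_self]
  · rw [embed_mul_comm_of_ne m n hkl, sub_self]

end embed

theorem σp_mul_σm_sub_σm_mul_σp : σp * σm - σm * σp = σz := by
  ext i j
  fin_cases i <;> fin_cases j <;> simp [σp, σm, σz]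

theorem Splus_mul_Sminus_sub_Sminus_mul_Splus (N : ℕ) :
    Splus N * Sminus N - Sminus N * Splus N = Sz N := by
  rw [Splus, Sminus, Sz, Finset.sum_mul_sum, Finset.sum_mul_sum, Finset.sum_comm (s := Finset.univ),
    ← Finset.sum_sub_distrib]
  simp only [← Finset.sum_sub_distrib, embed_mul_sub_mul, σp_mul_σm_sub_σm_mul_σp,
    Finset.sum_ite_eq', Finset.mem_univ, if_true]

/-- The exact finite-`N` commutator of the central-spin interaction Hamiltonian
`H_int = g (τ₊ S₋ + τ₋ S₊)` with the collective lowering operator: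
`[H_int, S₋] = g τ₋ S_z`. -/
theorem interaction_commutator (N : ℕ) (g : ℂ)
    (Hint : Matrix (Fin 2 × (Fin N → Fin 2)) (Fin 2 × (Fin N → Fin 2)) ℂ)
    (hH : Hint = g • (cembed σp * bembed (Sminus N) + cembed σm * bembed (Splus N))) :
    Hint * bembed (Sminus N) - bembed (Sminus N) * Hint
      = g • (cembed σm * bembed (Sz N)) := by
  subst hH
  rw [smul_mul_assoc, mul_smul_comm, ← smul_sub, add_mul, mul_add, add_sub_add_comm,
    cembed_mul_bembed, cembed_mul_bembed, cembed_mul_bembed]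
  simp only [bembed_eq_kronecker, kronecker_mul_one_kronecker_sub, sub_self,
    kronecker_zero, zero_add, Splus_mul_Sminus_sub_Sminus_mul_Splus]
end

section
/- Work with N spin-1/2 particles in the matrix algebra M_N. Let ρ be a diagonal 2×2 complex matrix with trace 1 (ρ 0 1 = ρ 1 0 = 0 and ρ 0 0 + ρ 1 1 = 1), and let ρ^{⊗N} ∈ M_N be the product state with entries ρ^{⊗N} f g = ∏_k ρ (f k) (g k). Then for every λ ∈ ℝ and s ∈ ℂ: Tr( ρ^{⊗N} * exp( λ • (s·S₊ − (conj s)·S₋) ) ) = (cos(λ·|s|))^N, where exp is the matrix exponential, S₊ := ∑_k σ₊^{(k)} and S₋ := ∑_k σ₋^{(k)}. -/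
open Matrix

/-- The product state `ρ^{⊗N}` with entries `∏ₖ ρ (f k) (g k)`. -/
noncomputable def prodState (N : ℕ) (ρ : Matrix (Fin 2) (Fin 2) ℂ) :
    Matrix (Fin N → Fin 2) (Fin N → Fin 2) ℂ :=
  fun f g => ∏ k, ρ (f k) (g k)

/-!
Since `m ↦ m^{(k)}` is an algebra homomorphism and operators at different sites commute,
`exp (∑ₖ m^{(k)}) = ∏ₖ (exp m)^{(k)} = (exp m)^{⊗N}`, and the trace of `ρ^{⊗N} (exp m)^{⊗N}` is
`(tr (ρ exp m))^N`. The single-site generator `G = s σ₊ - s̄ σ₋` satisfies `G² = -|s|²`, so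
`exp (λ G) = cos (λ|s|) + (sin (λ|s|) / |s|) G`; as `G` has zero diagonal and `ρ` is diagonal
of unit trace, `tr (ρ exp (λ G)) = cos (λ|s|)`.
-/

namespace Matrix

variable {ι n R : Type*} [Fintype ι] [CommSemiring R]

/-- The Kronecker product `⨂ᵢ M i`. -/
def piTensor (M : ι → Matrix n n R) : Matrix (ι → n) (ι → n) R :=
  of fun f g => ∏ i, M i (f i) (g i)

@[simp]
theorem piTensor_apply (M : ι → Matrix n n R) (f g : ι → n) :
    piTensor M f g = ∏ i, M i (f i) (g i) :=
  rfl

theorem piTensor_one [DecidableEq n] : piTensor (1 : ι → Matrix n n R) = 1 := by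
  ext f g
  simp only [piTensor_apply, Pi.one_apply, one_apply, Fintype.prod_boole, funext_iff]

theorem piTensor_mul [DecidableEq ι] [Fintype n] (M M' : ι → Matrix n n R) :
    piTensor M * piTensor M' = piTensor (M * M') := by
  ext f g
  simp only [mul_apply, piTensor_apply, Pi.mul_apply, Finset.prod_univ_sum,
    Fintype.piFinset_univ, ← Finset.prod_mul_distrib]

variable (ι n R) in
def piTensorHom [DecidableEq ι] [Fintype n] [DecidableEq n] :
    (ι → Matrix n n R) →* Matrix (ι → n) (ι → n) R where
  toFun := piTensor
  map_one' := piTensor_one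
  map_mul' M M' := (piTensor_mul M M').symm

theorem trace_piTensor [DecidableEq ι] [Fintype n] (M : ι → Matrix n n R) :
    trace (piTensor M) = ∏ i, trace (M i) := by
  simp only [trace, diag_apply, piTensor_apply, Finset.prod_univ_sum, Fintype.piFinset_univ]

end Matrix

theorem NormedSpace.exp_smul_of_mul_self_eq_neg_one {A : Type*} [NormedRing A]
    [NormedAlgebra ℝ A] {J : A} (hJ : J * J = -1) (θ : ℝ) :
    NormedSpace.exp (θ • J) = Real.cos θ • 1 + Real.sin θ • J := by
  let _ : NormedAlgebra ℚ A := NormedAlgebra.restrictScalars ℚ ℝ A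
  let f := Complex.lift ⟨J, hJ⟩
  have hθ : f (θ * Complex.I) = θ • J := by simp [f]
  rw [← hθ, ← NormedSpace.map_exp f f.toLinearMap.continuous_of_finiteDimensional,
    ← Complex.exp_eq_exp_ℂ, Complex.exp_mul_I, ← Complex.ofReal_cos, ← Complex.ofReal_sin]
  simp [f, Algebra.algebraMap_eq_smul_one, Complex.cos_ofReal_re, Complex.sin_ofReal_re]

section Spins

variable {N : ℕ}

theorem prodState_eq_piTensor (ρ : Matrix (Fin 2) (Fin 2) ℂ) :
    prodState N ρ = piTensor fun _ => ρ :=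
  rfl

theorem embed_eq_piTensor (m : Matrix (Fin 2) (Fin 2) ℂ) (k : Fin N) :
    embed m k = piTensor (Pi.mulSingle k m) := by
  ext f g
  rw [piTensor_apply, Fintype.prod_eq_mul_prod_compl k]
  have hsites : ∀ i ∈ ({k}ᶜ : Finset (Fin N)),
      (Pi.mulSingle k m : Fin N → Matrix (Fin 2) (Fin 2) ℂ) i (f i) (g i) =
      if f i = g i then 1 else 0 := fun i hi => by
    rw [Pi.mulSingle_eq_of_ne (by simpa using hi)]
    exact one_apply
  simp only [embed, Pi.mulSingle_eq_same, Finset.prod_congr rfl hsites, Finset.prod_boole,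
    Finset.mem_compl, Finset.mem_singleton, mul_ite, mul_one, mul_zero]

theorem embed_add (m m' : Matrix (Fin 2) (Fin 2) ℂ) (k : Fin N) :
    embed (m + m') k = embed m k + embed m' k := by
  ext f g
  simp only [embed, Matrix.add_apply]
  split_ifs <;> simp

theorem embed_smul (c : ℂ) (m : Matrix (Fin 2) (Fin 2) ℂ) (k : Fin N) :
    embed (c • m) k = c • embed m k := by
  ext f g
  simp only [embed, Matrix.smul_apply]
  split_ifs <;> simp

def embedAlgHom (k : Fin N) :
    Matrix (Fin 2) (Fin 2) ℂ →ₐ[ℂ] Matrix (Fin N → Fin 2) (Fin N → Fin 2) ℂ :=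
  AlgHom.ofLinearMap ⟨⟨(embed · k), (embed_add · · k)⟩, (embed_smul · · k)⟩
    (by simp only [LinearMap.coe_mk, AddHom.coe_mk, embed_eq_piTensor, Pi.mulSingle_one,
      piTensor_one])
    (fun m m' => by simp only [LinearMap.coe_mk, AddHom.coe_mk, embed_eq_piTensor,
      Pi.mulSingle_mul, piTensor_mul])

theorem embed_exp (m : Matrix (Fin 2) (Fin 2) ℂ) (k : Fin N) :
    NormedSpace.exp (embed m k) = embed (NormedSpace.exp m) k := by
  open scoped Norms.Operator in
  exact (NormedSpace.map_exp (embedAlgHom k)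
    (embedAlgHom k).toLinearMap.continuous_of_finiteDimensional m).symm

theorem commute_embed (m m' : Matrix (Fin 2) (Fin 2) ℂ) {j k : Fin N} (hjk : j ≠ k) :
    Commute (embed m j) (embed m' k) := by
  rw [embed_eq_piTensor, embed_eq_piTensor, commute_iff_eq, piTensor_mul, piTensor_mul,
    ((Pi.mulSingle_commute (f := fun _ : Fin N => Matrix (Fin 2) (Fin 2) ℂ)) hjk m m').eq]

theorem pairwise_commute_embed (m : Matrix (Fin 2) (Fin 2) ℂ) :
    Pairwise (Function.onFun Commute fun k : Fin N => embed m k) :=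
  fun _ _ hjk => commute_embed m m hjk

theorem exp_sum_embed (m : Matrix (Fin 2) (Fin 2) ℂ) :
    NormedSpace.exp (∑ k : Fin N, embed m k) = prodState N (NormedSpace.exp m) := by
  have hcomm : Pairwise (Function.onFun Commute fun k : Fin N =>
      (Pi.mulSingle k (NormedSpace.exp m) : Fin N → Matrix (Fin 2) (Fin 2) ℂ)) :=
    fun j k _ => Pi.mulSingle_apply_commute (fun _ => NormedSpace.exp m) j k
  calc NormedSpace.exp (∑ k : Fin N, embed m k)
      = Finset.univ.noncommProd (fun k => embed (NormedSpace.exp m) k)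
          ((pairwise_commute_embed _).set_pairwise _) := by
        rw [Matrix.exp_sum_of_commute _ _ ((pairwise_commute_embed m).set_pairwise _)]
        exact Finset.noncommProd_congr rfl (fun k _ => embed_exp m k) _
    _ = piTensorHom (Fin N) (Fin 2) ℂ (Finset.univ.noncommProd
          (fun k => Pi.mulSingle k (NormedSpace.exp m)) (hcomm.set_pairwise _)) := by
        rw [Finset.map_noncommProd]
        exact Finset.noncommProd_congr rfl (fun k _ => embed_eq_piTensor _ k) _
    _ = prodState N (NormedSpace.exp m) := by
        rw [Finset.noncommProd_mulSingle (fun _ => NormedSpace.exp m)]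
        rfl

end Spins

def rotationGenerator (s : ℂ) : Matrix (Fin 2) (Fin 2) ℂ := s • σp - starRingEnd ℂ s • σm

theorem rotationGenerator_mul_self (s : ℂ) :
    rotationGenerator s * rotationGenerator s = -((‖s‖ ^ 2 : ℝ) • 1) := by
  ext i j
  fin_cases i <;> fin_cases j <;>
    simp [rotationGenerator, σp, σm, mul_apply, Fin.sum_univ_two, Complex.mul_conj,
      Complex.conj_mul', Complex.real_smul, Complex.normSq_eq_norm_sq]

theorem exp_smul_rotationGenerator (lam : ℝ) (s : ℂ) :
    NormedSpace.exp (lam • rotationGenerator s) =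
      Real.cos (lam * ‖s‖) • 1 + (Real.sin (lam * ‖s‖) / ‖s‖) • rotationGenerator s := by
  rcases eq_or_ne s 0 with rfl | hs
  · simp [rotationGenerator]
  have hs' : ‖s‖ ≠ 0 := norm_ne_zero_iff.mpr hs
  have hJ : (‖s‖⁻¹ • rotationGenerator s) * (‖s‖⁻¹ • rotationGenerator s) = -1 := by
    rw [smul_mul_smul_comm, rotationGenerator_mul_self, smul_neg, smul_smul,
      show ‖s‖⁻¹ * ‖s‖⁻¹ * ‖s‖ ^ 2 = 1 by field_simp, one_smul]
  have hscale : lam • rotationGenerator s = (lam * ‖s‖) • (‖s‖⁻¹ • rotationGenerator s) := by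
    rw [smul_smul, mul_assoc, mul_inv_cancel₀ hs', mul_one]
  rw [hscale]
  open scoped Norms.Operator in
  refine (NormedSpace.exp_smul_of_mul_self_eq_neg_one hJ (lam * ‖s‖)).trans ?_
  rw [smul_smul, div_eq_mul_inv]

theorem trace_mul_rotationGenerator {ρ : Matrix (Fin 2) (Fin 2) ℂ} (hd1 : ρ 0 1 = 0)
    (hd2 : ρ 1 0 = 0) (s : ℂ) : trace (ρ * rotationGenerator s) = 0 := by
  simp [trace_fin_two, mul_apply, Fin.sum_univ_two, rotationGenerator, σp, σm, hd1, hd2]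

/-- Finite-`N` characteristic function of the collective displacement-like operator:
for a diagonal single-spin state `ρ` of unit trace,
`Tr(ρ^{⊗N} exp(λ (s S₊ - s̄ S₋))) = (cos(λ |s|))^N`. -/
theorem characteristic_function_finite (N : ℕ) (ρ : Matrix (Fin 2) (Fin 2) ℂ)
    (hd1 : ρ 0 1 = 0) (hd2 : ρ 1 0 = 0) (htr : ρ 0 0 + ρ 1 1 = 1)
    (lam : ℝ) (s : ℂ) :
    Matrix.trace (prodState N ρ *
        NormedSpace.exp (lam • (s • Splus N - (starRingEnd ℂ) s • Sminus N)))
      = (((Real.cos (lam * ‖s‖)) ^ N : ℝ) : ℂ) := by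
  have hgen : lam • (s • Splus N - (starRingEnd ℂ) s • Sminus N) =
      ∑ k, embed (lam • rotationGenerator s) k := by
    simp only [Splus, Sminus, Finset.smul_sum, ← Finset.sum_sub_distrib]
    refine Finset.sum_congr rfl fun k _ => ?_
    change _ = embedAlgHom k _
    rw [rotationGenerator, AlgHom.map_smul_of_tower, map_sub, map_smul, map_smul]
    rfl
  have hsite :
      trace (ρ * NormedSpace.exp (lam • rotationGenerator s)) = Real.cos (lam * ‖s‖) := by
    rw [exp_smul_rotationGenerator, mul_add, trace_add, mul_smul_comm, mul_smul_comm, trace_smul,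
      trace_smul, trace_mul_rotationGenerator hd1 hd2, mul_one, trace_fin_two, htr, smul_zero,
      add_zero, Complex.real_smul, mul_one]
  rw [hgen, exp_sum_embed, prodState_eq_piTensor, prodState_eq_piTensor, piTensor_mul,
    trace_piTensor]
  simp only [Pi.mul_apply, hsite, Fin.prod_const, Complex.ofReal_pow]
end
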